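/- arXiv:2002.07665 — 5 statements merged into one kernel-verified Lean document; each statement's English description precedes it below -/
import Mathlib

section
/- Let n ≥ 3 be an integer and a_1, ..., a_n real numbers. Then ∑_{1 ≤ i < j ≤ n} a_i a_j − a_1 a_2 ≤ ((n−2)/(2(n−1))) (∑_{i=1}^n a_i)². -/
/-!
With `S = ∑ aᵢ` and `Q = ∑ aᵢ²`, the sum over pairs is `(S² - Q) / 2`. Cauchy–Schwarz for the
`n - 1` numbers `a₁ + a₂, a₃, …, aₙ` gives `S² ≤ (n - 1) (Q + 2 a₁ a₂)`, which is the claim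
after rearranging.
-/

open Finset

theorem two_mul_sum_pairs_add_sum_sq {R : Type*} [CommSemiring R] (a : ℕ → R) (n : ℕ) :
    2 * (∑ i ∈ range n, ∑ j ∈ Ico (i + 1) n, a i * a j) + ∑ i ∈ range n, a i ^ 2 =
      (∑ i ∈ range n, a i) ^ 2 := by
  induction n with
  | zero => simp
  | succ n ih =>
    have hrow : ∀ i ∈ range n, ∑ j ∈ Ico (i + 1) (n + 1), a i * a j =
        ∑ j ∈ Ico (i + 1) n, a i * a j + a i * a n :=
      fun i hi => sum_Ico_succ_top (by simpa using hi) _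
    rw [sum_range_succ (fun i => ∑ j ∈ Ico (i + 1) (n + 1), a i * a j), sum_congr rfl hrow,
      sum_add_distrib, ← sum_mul, Ico_self, sum_empty, sum_range_succ (a · ^ 2),
      sum_range_succ a, add_sq, ← ih]
    ring

section OrderedSemiring

variable {α : Type*} [CommSemiring α] [LinearOrder α] [IsStrictOrderedRing α] [ExistsAddOfLE α]

theorem sq_add_sum_range_le (x : α) (y : ℕ → α) (m : ℕ) :
    (x + ∑ i ∈ range m, y i) ^ 2 ≤ (m + 1) * (x ^ 2 + ∑ i ∈ range m, y i ^ 2) := by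
  have h := sq_sum_le_card_mul_sum_sq (s := range (m + 1))
    (f := fun i => if i = 0 then x else y (i - 1))
  simpa [sum_range_succ', add_comm] using h

theorem sq_sum_range_le_merge_first_two (a : ℕ → α) (m : ℕ) :
    (∑ i ∈ range (m + 2), a i) ^ 2 ≤
      (m + 1) * (∑ i ∈ range (m + 2), a i ^ 2 + 2 * (a 0 * a 1)) := by
  have h := sq_add_sum_range_le (a 0 + a 1) (fun i => a (i + 2)) m
  simp only [sum_range_succ' _ (m + 1), sum_range_succ' _ m] at h ⊢
  convert h using 2 <;> ring

end OrderedSemiring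

theorem chen_lemma (n : ℕ) (hn : 3 ≤ n) (a : ℕ → ℝ) :
    (∑ i ∈ Finset.range n, ∑ j ∈ Finset.Ico (i + 1) n, a i * a j) - a 0 * a 1 ≤
      ((n - 2 : ℝ) / (2 * (n - 1))) * (∑ i ∈ Finset.range n, a i) ^ 2 := by
  obtain ⟨m, rfl⟩ : ∃ m, n = m + 2 := ⟨n - 2, by omega⟩
  have hpairs := two_mul_sum_pairs_add_sum_sq a (m + 2)
  have hcs := sq_sum_range_le_merge_first_two a m
  push_cast
  rw [div_mul_eq_mul_div, le_div_iff₀ (by linarith [m.cast_nonneg (α := ℝ)])]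
  linear_combination hcs + (m + 1 : ℝ) * hpairs
end

section
/- Let n ≥ 4 be an integer and a_1, ..., a_n real numbers. Then ∑_{1 ≤ i < j ≤ n} a_i a_j − a_1 a_2 − a_3 a_4 ≤ ((n−3)/(2(n−2))) (∑_{i=1}^n a_i)². -/
open Finset

lemma pair_sum_identity (a : ℕ → ℝ) (n : ℕ) :
    2 * (∑ i ∈ Finset.range n, ∑ j ∈ Finset.Ico (i + 1) n, a i * a j)
      + ∑ i ∈ Finset.range n, (a i) ^ 2 = (∑ i ∈ Finset.range n, a i) ^ 2 := by
  induction n with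
  | zero => simp
  | succ n ih =>
    have h1 : ∀ i ∈ Finset.range n,
        (∑ j ∈ Finset.Ico (i + 1) (n + 1), a i * a j)
          = (∑ j ∈ Finset.Ico (i + 1) n, a i * a j) + a i * a n := by
      intro i hi
      rw [Finset.sum_Ico_succ_top (Nat.succ_le_of_lt (Finset.mem_range.mp hi))]
    rw [Finset.sum_range_succ, Finset.sum_range_succ (fun i => a i ^ 2),
      Finset.sum_range_succ a, Finset.sum_congr rfl h1, Finset.sum_add_distrib,
      ← Finset.sum_mul]
    simp only [Nat.lt_irrefl, Finset.Ico_self, Finset.sum_empty]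
    nlinarith [ih]

theorem chen_lemma_delta22 (n : ℕ) (hn : 4 ≤ n) (a : ℕ → ℝ) :
    (∑ i ∈ Finset.range n, ∑ j ∈ Finset.Ico (i + 1) n, a i * a j) - a 0 * a 1 - a 2 * a 3 ≤
      ((n - 3 : ℝ) / (2 * (n - 2))) * (∑ i ∈ Finset.range n, a i) ^ 2 := by
  -- define b on range (n-2)
  set b : ℕ → ℝ := fun k => if k = 0 then a 0 + a 1 else if k = 1 then a 2 + a 3 else a (k + 2)
    with hb
  have hgen : ∀ g : ℝ → ℝ, ∑ k ∈ Finset.range (n - 2), g (b k)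
      = g (a 0 + a 1) + g (a 2 + a 3) + ∑ i ∈ Finset.Ico 4 n, g (a i) := by
    intro g
    have h2 : (2:ℕ) ≤ n - 2 := by omega
    rw [Finset.range_eq_Ico, ← Finset.sum_Ico_consecutive _ (Nat.zero_le 2) h2]
    have h01 : ∑ k ∈ Finset.Ico 0 2, g (b k) = g (a 0 + a 1) + g (a 2 + a 3) := by
      simp [Finset.sum_Ico_eq_sum_range, Finset.sum_range_succ, hb]
    rw [h01]
    congr 1
    have hbk : ∀ k ∈ Finset.Ico 2 (n - 2), g (b k) = g (a (k + 2)) := by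
      intro k hk
      have hk2 : 2 ≤ k := (Finset.mem_Ico.mp hk).1
      simp only [hb]
      rw [if_neg (by omega), if_neg (by omega)]
    rw [Finset.sum_congr rfl hbk, Finset.sum_Ico_eq_sum_range,
      Finset.sum_Ico_eq_sum_range]
    have : n - 2 - 2 = n - 4 := by omega
    rw [this]
    exact Finset.sum_congr rfl (fun i _ => by ring_nf)
  have h4 : ∑ i ∈ Finset.range n, a i
      = a 0 + a 1 + a 2 + a 3 + ∑ i ∈ Finset.Ico 4 n, a i := by
    rw [Finset.range_eq_Ico, ← Finset.sum_Ico_consecutive _ (Nat.zero_le 4) hn]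
    norm_num [Finset.sum_Ico_eq_sum_range (f := a) (m := 0), Finset.sum_range_succ]
  have hsumb : ∑ k ∈ Finset.range (n - 2), b k = ∑ i ∈ Finset.range n, a i := by
    have := hgen id
    simp only [id] at this
    rw [this, h4]; ring
  have hsqb : ∑ k ∈ Finset.range (n - 2), (b k) ^ 2
      = (a 0 + a 1) ^ 2 + (a 2 + a 3) ^ 2 + ∑ i ∈ Finset.Ico 4 n, (a i) ^ 2 := by
    exact hgen (fun x => x ^ 2)
  have hCS := sq_sum_le_card_mul_sum_sq (s := Finset.range (n - 2)) (f := b)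
  rw [Finset.card_range, hsumb, hsqb] at hCS
  have hQ : ∑ i ∈ Finset.range n, (a i) ^ 2
      = a 0 ^ 2 + a 1 ^ 2 + a 2 ^ 2 + a 3 ^ 2 + ∑ i ∈ Finset.Ico 4 n, (a i) ^ 2 := by
    rw [Finset.range_eq_Ico, ← Finset.sum_Ico_consecutive _ (Nat.zero_le 4) hn]
    norm_num [Finset.sum_Ico_eq_sum_range, Finset.sum_range_succ]
  have hid := pair_sum_identity a n
  have hn2 : (2:ℝ) ≤ (n : ℝ) - 2 := by
    have : (4:ℝ) ≤ (n:ℝ) := by exact_mod_cast hn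
    linarith
  have hcast : ((n - 2 : ℕ) : ℝ) = (n : ℝ) - 2 := by
    have : (2:ℕ) ≤ n := by omega
    push_cast [this]; ring
  rw [hcast] at hCS
  set S := ∑ i ∈ Finset.range n, a i
  rw [div_mul_eq_mul_div, le_div_iff₀ (by linarith)]
  nlinarith [hCS, hid, hQ]
end

section
/- Let n ≥ 3 and a_1, ..., a_n be real numbers with equality ∑_{1≤i<j≤n} a_i a_j − a_1 a_2 = ((n−2)/(2(n−1))) (∑_{i=1}^n a_i)². Then a_1 + a_2 = a_3 = a_4 = ... = a_n. -/
open Finset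

private lemma sq_sum_aux (n : ℕ) (a : ℕ → ℝ) :
    (∑ i ∈ Finset.range n, a i) ^ 2 = (∑ i ∈ Finset.range n, (a i) ^ 2)
      + 2 * ∑ i ∈ Finset.range n, ∑ j ∈ Finset.Ico (i + 1) n, a i * a j := by
  induction n with
  | zero => simp
  | succ n ih =>
    have h1 : ∑ i ∈ Finset.range (n + 1), ∑ j ∈ Finset.Ico (i + 1) (n + 1), a i * a j
        = (∑ i ∈ Finset.range n, ∑ j ∈ Finset.Ico (i + 1) n, a i * a j)
          + (∑ i ∈ Finset.range n, a i) * a n := by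
      rw [Finset.sum_range_succ, Finset.Ico_self, Finset.sum_empty, add_zero, Finset.sum_mul,
        ← Finset.sum_add_distrib]
      refine Finset.sum_congr rfl fun i hi => ?_
      have hi' := Finset.mem_range.mp hi
      rw [Finset.sum_Ico_succ_top (by omega : i + 1 ≤ n) (fun j => a i * a j)]
    rw [Finset.sum_range_succ a, Finset.sum_range_succ (fun i => a i ^ 2), h1]
    linear_combination ih

private lemma sum_sq_sub (N : ℕ) (f : ℕ → ℝ) :
    ∑ i ∈ Finset.range N, ∑ j ∈ Finset.range N, (f i - f j) ^ 2
      = 2 * N * (∑ i ∈ Finset.range N, (f i) ^ 2) - 2 * (∑ i ∈ Finset.range N, f i) ^ 2 := by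
  have hinner : ∀ i, ∑ j ∈ Finset.range N, (f i - f j) ^ 2
      = N * f i ^ 2 - 2 * f i * (∑ j ∈ Finset.range N, f j)
        + (∑ j ∈ Finset.range N, (f j) ^ 2) := by
    intro i
    have : ∀ j, (f i - f j) ^ 2 = f i ^ 2 - 2 * f i * f j + f j ^ 2 := fun j => by ring
    simp only [this, Finset.sum_add_distrib, Finset.sum_sub_distrib, Finset.sum_const,
      Finset.card_range, nsmul_eq_mul, ← Finset.mul_sum]
  have h2 : ∑ i ∈ Finset.range N, ∑ j ∈ Finset.range N, (f i - f j) ^ 2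
      = ∑ i ∈ Finset.range N, ((N : ℝ) * f i ^ 2 - 2 * f i * (∑ j ∈ Finset.range N, f j)
        + ∑ j ∈ Finset.range N, f j ^ 2) := Finset.sum_congr rfl fun i _ => hinner i
  rw [h2, Finset.sum_add_distrib, Finset.sum_sub_distrib, ← Finset.mul_sum, ← Finset.sum_mul,
    Finset.sum_const, Finset.card_range, nsmul_eq_mul]
  have h3 : ∑ i ∈ Finset.range N, 2 * f i = 2 * ∑ i ∈ Finset.range N, f i := by
    rw [Finset.mul_sum]
  rw [h3]
  ring

theorem chen_lemma_equality_case (n : ℕ) (hn : 3 ≤ n) (a : ℕ → ℝ)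
    (heq : (∑ i ∈ Finset.range n, ∑ j ∈ Finset.Ico (i + 1) n, a i * a j) - a 0 * a 1 =
      ((n - 2 : ℝ) / (2 * (n - 1))) * (∑ i ∈ Finset.range n, a i) ^ 2) :
    ∀ i ∈ Finset.Ico 2 n, a 0 + a 1 = a i := by
  obtain ⟨m, rfl⟩ : ∃ m, n = m + 3 := ⟨n - 3, by omega⟩
  set b : ℕ → ℝ := fun i => if i = 0 then a 0 + a 1 else a (i + 1) with hb
  set S : ℝ := ∑ i ∈ Finset.range (m + 3), a i with hS
  set A : ℝ := ∑ i ∈ Finset.range (m + 3), (a i) ^ 2 with hA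
  set B : ℝ := ∑ i ∈ Finset.range (m + 2), (b i) ^ 2 with hB
  -- sum of b equals S
  have hbS : ∑ i ∈ Finset.range (m + 2), b i = S := by
    rw [hS, Finset.sum_range_succ' a, Finset.sum_range_succ' (fun i => a (i + 1)),
      Finset.sum_range_succ' b]
    have h0 : b 0 = a 0 + a 1 := by simp [hb]
    have hsucc : ∀ i, b (i + 1) = a (i + 2) := by intro i; simp [hb]
    simp only [h0, hsucc]
    ring
  -- B = A + 2 a0 a1
  have hBA : B = A + 2 * (a 0 * a 1) := by
    rw [hB, hA, Finset.sum_range_succ' (fun i => a i ^ 2),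
      Finset.sum_range_succ' (fun i => a (i + 1) ^ 2),
      Finset.sum_range_succ' (fun i => b i ^ 2)]
    have h0 : b 0 = a 0 + a 1 := by simp [hb]
    have hsucc : ∀ i, b (i + 1) = a (i + 2) := by intro i; simp [hb]
    simp only [h0, hsucc]
    ring
  -- from heq derive S^2 = (m+2) * B
  have hsq := sq_sum_aux (m + 3) a
  have hkey : S ^ 2 = (m + 2 : ℝ) * B := by
    have hcast : ((m + 3 : ℕ) - 2 : ℝ) / (2 * ((m + 3 : ℕ) - 1)) = (m + 1) / (2 * (m + 2)) := by
      push_cast; ring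
    rw [hcast] at heq
    have hm2 : ((m : ℝ) + 2) ≠ 0 := by positivity
    have hT : (∑ i ∈ Finset.range (m + 3), ∑ j ∈ Finset.Ico (i + 1) (m + 3), a i * a j)
        = (S ^ 2 - A) / 2 := by
      rw [hS, hA] at *; linarith [hsq]
    rw [hT] at heq
    rw [hBA]
    field_simp at heq
    nlinarith [heq]
  -- sum of squared differences is zero
  have hzero : ∑ i ∈ Finset.range (m + 2), ∑ j ∈ Finset.range (m + 2), (b i - b j) ^ 2 = 0 := by
    rw [sum_sq_sub (m + 2) b, hbS, ← hB, hkey]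
    push_cast
    ring
  have hall := (Finset.sum_eq_zero_iff_of_nonneg
    (fun i _ => Finset.sum_nonneg fun j _ => sq_nonneg (b i - b j))).mp hzero
  intro i hi
  rw [Finset.mem_Ico] at hi
  have h0mem : (0 : ℕ) ∈ Finset.range (m + 2) := by simp
  have hinner := (Finset.sum_eq_zero_iff_of_nonneg
    (fun j _ => sq_nonneg (b 0 - b j))).mp (hall 0 h0mem)
  have hjmem : i - 1 ∈ Finset.range (m + 2) := by simp; omega
  have := hinner (i - 1) hjmem
  have hbeq : b 0 = b (i - 1) := by
    have := sq_eq_zero_iff.mp this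
    linarith
  have h0 : b 0 = a 0 + a 1 := by simp [hb]
  have hne : i - 1 ≠ 0 := by omega
  have h1 : b (i - 1) = a i := by
    simp only [hb, if_neg hne]
    congr 1; omega
  rw [h0, h1] at hbeq
  exact hbeq
end

section
/- Let n ≥ 4 and a_1, ..., a_n be real numbers with ∑_{1≤i<j≤n} a_i a_j − a_1 a_2 − a_3 a_4 = ((n−3)/(2(n−2))) (∑_{i=1}^n a_i)². Then a_1 + a_2 = a_3 + a_4 = a_5 = ... = a_n. -/
open Finset

lemma chen_key_id (m : ℕ) (b : ℕ → ℝ) :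
    ∑ i ∈ range m, ∑ j ∈ Ico (i+1) m, (b i - b j)^2
      = m * ∑ i ∈ range m, b i ^ 2 - (∑ i ∈ range m, b i)^2 := by
  induction m with
  | zero => simp
  | succ m ih =>
    rw [Finset.sum_range_succ, Finset.sum_range_succ (fun i => b i ^ 2),
      Finset.sum_range_succ b]
    have h1 : ∀ i ∈ range m, ∑ j ∈ Ico (i+1) (m+1), (b i - b j)^2
        = (∑ j ∈ Ico (i+1) m, (b i - b j)^2) + (b i - b m)^2 := by
      intro i hi
      rw [Finset.sum_Ico_succ_top (Nat.succ_le_of_lt (mem_range.mp hi))]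
    rw [Finset.sum_congr rfl h1, Finset.sum_add_distrib, ih]
    have h2 : ∑ i ∈ range m, (b i - b m)^2
        = ∑ i ∈ range m, b i ^2 - 2 * (∑ i ∈ range m, b i) * b m + m * b m ^2 := by
      have : ∀ i, (b i - b m)^2 = b i ^2 - 2 * b i * b m + b m ^2 := by intro i; ring
      simp only [this, Finset.sum_add_distrib, Finset.sum_sub_distrib, Finset.sum_const,
        Finset.card_range, ← Finset.sum_mul, ← Finset.mul_sum, nsmul_eq_mul]
    simp only [Ico_self, Finset.sum_empty, h2]
    push_cast
    ring

lemma chen_sq_sum (n : ℕ) (a : ℕ → ℝ) :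
    (∑ i ∈ range n, a i)^2
      = ∑ i ∈ range n, a i ^ 2 + 2 * ∑ i ∈ range n, ∑ j ∈ Ico (i+1) n, a i * a j := by
  induction n with
  | zero => simp
  | succ n ih =>
    rw [Finset.sum_range_succ, Finset.sum_range_succ (fun i => a i ^ 2),
      Finset.sum_range_succ (fun i => ∑ j ∈ Ico (i+1) (n+1), a i * a j)]
    have h1 : ∀ i ∈ range n, ∑ j ∈ Ico (i+1) (n+1), a i * a j
        = (∑ j ∈ Ico (i+1) n, a i * a j) + a i * a n := by
      intro i hi
      rw [Finset.sum_Ico_succ_top (Nat.succ_le_of_lt (mem_range.mp hi))]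
    rw [Finset.sum_congr rfl h1, Finset.sum_add_distrib, ← Finset.sum_mul]
    simp only [Ico_self, Finset.sum_empty]
    nlinarith [ih]

theorem chen_lemma_delta22_equality_case (n : ℕ) (hn : 4 ≤ n) (a : ℕ → ℝ)
    (heq : (∑ i ∈ Finset.range n, ∑ j ∈ Finset.Ico (i + 1) n, a i * a j) - a 0 * a 1 - a 2 * a 3 =
      ((n - 3 : ℝ) / (2 * (n - 2))) * (∑ i ∈ Finset.range n, a i) ^ 2) :
    a 0 + a 1 = a 2 + a 3 ∧ ∀ i ∈ Finset.Ico 4 n, a 0 + a 1 = a i := by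
  set b : ℕ → ℝ := fun i => if i = 0 then a 0 + a 1 else if i = 1 then a 2 + a 3 else a (i + 2)
    with hb
  set m := n - 2 with hm
  have hmn : m + 2 = n := Nat.sub_add_cancel (by omega)
  have hm2 : 2 ≤ m := by omega
  -- sum of b equals sum of a
  have hsplitb : ∀ f : ℕ → ℝ, ∑ i ∈ range m, f i = f 0 + f 1 + ∑ i ∈ Ico 2 m, f i := by
    intro f
    rw [range_eq_Ico, ← Finset.sum_Ico_consecutive f (Nat.zero_le 2) hm2,
      Nat.Ico_zero_eq_range]
    simp [Finset.sum_range_succ]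
  have hshift : ∀ f : ℕ → ℝ, ∑ i ∈ Ico 2 m, f (i + 2) = ∑ i ∈ Ico 4 n, f i := by
    intro f
    rw [Finset.sum_Ico_add' f 2 m 2, hmn]
  have hsplita : ∀ f : ℕ → ℝ, ∑ i ∈ range n, f i
      = f 0 + f 1 + f 2 + f 3 + ∑ i ∈ Ico 4 n, f i := by
    intro f
    rw [range_eq_Ico, ← Finset.sum_Ico_consecutive f (Nat.zero_le 4) (by omega : 4 ≤ n),
      Nat.Ico_zero_eq_range]
    simp [Finset.sum_range_succ]
  have hbtail : ∀ g : ℝ → ℝ, ∑ i ∈ Ico 2 m, g (b i) = ∑ i ∈ Ico 2 m, g (a (i + 2)) := by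
    intro g
    refine Finset.sum_congr rfl fun i hi => ?_
    have : i ≠ 0 ∧ i ≠ 1 := by have := (Finset.mem_Ico.mp hi).1; omega
    simp [hb, this.1, this.2]
  have hS : ∑ i ∈ range m, b i = ∑ i ∈ range n, a i := by
    rw [hsplitb, hbtail (fun x => x), hshift, hsplita]
    simp [hb]
    ring
  have hQ : ∑ i ∈ range m, b i ^ 2
      = ∑ i ∈ range n, a i ^ 2 + 2 * (a 0 * a 1) + 2 * (a 2 * a 3) := by
    rw [hsplitb (fun i => b i ^ 2), hbtail (fun x => x ^ 2), hshift (fun i => a i ^ 2),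
      hsplita (fun i => a i ^ 2)]
    simp [hb]
    ring
  -- the sum of squares of differences vanishes
  have hn2 : (n : ℝ) - 2 ≠ 0 := by
    have : (4 : ℝ) ≤ n := by exact_mod_cast hn
    linarith
  have hmcast : (m : ℝ) = (n : ℝ) - 2 := by
    have : ((m : ℕ) : ℝ) + 2 = n := by exact_mod_cast congrArg Nat.cast hmn
    linarith
  have hzero : ∑ i ∈ range m, ∑ j ∈ Ico (i+1) m, (b i - b j)^2 = 0 := by
    rw [chen_key_id, hS, hQ, hmcast]
    have hsq := chen_sq_sum n a
    field_simp at heq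
    nlinarith [heq, hsq]
  have hij : ∀ i j, i < j → j < m → b i = b j := by
    intro i j hij hjm
    have h1 := (Finset.sum_eq_zero_iff_of_nonneg
      (fun i _ => Finset.sum_nonneg fun j _ => sq_nonneg _)).mp hzero i
      (Finset.mem_range.mpr (lt_trans hij hjm))
    have h2 := (Finset.sum_eq_zero_iff_of_nonneg fun j _ => sq_nonneg _).mp h1 j
      (Finset.mem_Ico.mpr ⟨hij, hjm⟩)
    have := pow_eq_zero_iff (n := 2) (by norm_num) |>.mp h2
    linarith [sub_eq_zero.mp this]
  constructor
  · have := hij 0 1 (by norm_num) (by omega)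
    simpa [hb] using this
  · intro i hi
    rw [Finset.mem_Ico] at hi
    have h02 : b 0 = b (i - 2) := hij 0 (i - 2) (by omega) (by omega)
    have : b (i - 2) = a i := by
      have h1 : i - 2 ≠ 0 := by omega
      have h2 : i - 2 ≠ 1 := by omega
      have h3 : i - 2 + 2 = i := by omega
      simp [hb, h1, h2, h3]
    rw [← this, ← h02]
    simp [hb]
end

section
/- Let n ≥ 3 and suppose real numbers h_{ij} (1 ≤ i, j ≤ n, symmetric: h_{ij} = h_{ji}) satisfy h_{11} + h_{22} = h_{33} = ... = h_{nn} and h_{ij} = 0 for all i ≠ j. Then ∑_{1≤i<j≤n} (h_{ii} h_{jj} − h_{ij}²) − (h_{11}h_{22} − h_{12}²) = ((n−2)/(2(n−1))) (∑_{i=1}^n h_{ii})². -/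
/-! With the off-diagonal entries zero, the left-hand side is `∑_{i<j} dᵢ dⱼ - d₀ d₁` for the
diagonal `d`, and `2 ∑_{i<j} dᵢ dⱼ = (∑ dᵢ)² - ∑ dᵢ²`. Writing `s = d₀ + d₁`, the hypotheses give
`∑ dᵢ = (n - 1) s` and `∑ dᵢ² = d₀² + d₁² + (n - 2) s²`, so both sides equal `(n - 1)(n - 2) s² / 2`. -/

open Finset

theorem Finset.two_mul_sum_range_sum_Ico_mul {R : Type*} [CommRing R] (f : ℕ → R) (n : ℕ) :
    2 * ∑ i ∈ range n, ∑ j ∈ Ico (i + 1) n, f i * f j =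
      (∑ i ∈ range n, f i) ^ 2 - ∑ i ∈ range n, f i ^ 2 := by
  induction n with
  | zero => simp
  | succ n ih =>
    have hstep : ∑ i ∈ range n, ∑ j ∈ Ico (i + 1) (n + 1), f i * f j =
        ∑ i ∈ range n, ∑ j ∈ Ico (i + 1) n, f i * f j + (∑ i ∈ range n, f i) * f n := by
      rw [sum_mul, ← sum_add_distrib]
      exact sum_congr rfl fun i hi => sum_Ico_succ_top (mem_range.mp hi) _
    rw [sum_range_succ, Ico_self, sum_empty, add_zero, hstep, sum_range_succ f,
      sum_range_succ (fun i => f i ^ 2)]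
    linear_combination ih

theorem Finset.sum_range_eq_of_eq_on_Ico_two {M : Type*} [AddCommMonoid M] (g : ℕ → M) {n : ℕ}
    (hn : 2 ≤ n) {c : M} (hc : ∀ i ∈ Ico 2 n, g i = c) :
    ∑ i ∈ range n, g i = g 0 + g 1 + (n - 2) • c := by
  rw [← sum_range_add_sum_Ico g hn, sum_congr rfl hc, sum_const, Nat.card_Ico, sum_range_succ,
    sum_range_one]

theorem chen_equality_converse_general (n : ℕ) (hn : 3 ≤ n) (h : ℕ → ℕ → ℝ)
    (hdiag : ∀ i ∈ Finset.Ico 2 n, h 0 0 + h 1 1 = h i i)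
    (hoff : ∀ i j, i ≠ j → h i j = 0) :
    (∑ i ∈ Finset.range n, ∑ j ∈ Finset.Ico (i + 1) n, (h i i * h j j - (h i j) ^ 2)) -
        (h 0 0 * h 1 1 - (h 0 1) ^ 2) =
      ((n - 2 : ℝ) / (2 * (n - 1))) * (∑ i ∈ Finset.range n, h i i) ^ 2 := by
  set s := h 0 0 + h 1 1
  have hn2 : 2 ≤ n := by omega
  have hpairs : ∑ i ∈ range n, ∑ j ∈ Ico (i + 1) n, (h i i * h j j - h i j ^ 2) =
      ∑ i ∈ range n, ∑ j ∈ Ico (i + 1) n, h i i * h j j :=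
    sum_congr rfl fun i _ => sum_congr rfl fun j hj => by
      rw [hoff i j (by have := (mem_Ico.mp hj).1; omega), sq, mul_zero, sub_zero]
  have hsum : ∑ i ∈ range n, h i i = ((n : ℝ) - 1) * s := by
    rw [sum_range_eq_of_eq_on_Ico_two (fun i => h i i) hn2 fun i hi => (hdiag i hi).symm,
      nsmul_eq_mul, Nat.cast_sub hn2]
    push_cast
    ring
  have hsumsq : ∑ i ∈ range n, h i i ^ 2 = h 0 0 ^ 2 + h 1 1 ^ 2 + ((n : ℝ) - 2) * s ^ 2 := by
    rw [sum_range_eq_of_eq_on_Ico_two (fun i => h i i ^ 2) hn2 fun i hi => by rw [← hdiag i hi],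
      nsmul_eq_mul, Nat.cast_sub hn2]
    push_cast
    rfl
  have hpairs_eq := two_mul_sum_range_sum_Ico_mul (fun i => h i i) n
  rw [hsum, hsumsq] at hpairs_eq
  have hn1 : (n : ℝ) - 1 ≠ 0 := by
    have : (3 : ℝ) ≤ n := by exact_mod_cast hn
    linarith
  have hrhs : ((n - 2 : ℝ) / (2 * (n - 1))) * (((n : ℝ) - 1) * s) ^ 2 =
      ((n : ℝ) - 1) * (n - 2) / 2 * s ^ 2 := by
    field_simp
  rw [hpairs, hoff 0 1 one_ne_zero.symm, hsum, hrhs]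
  linear_combination hpairs_eq / 2

theorem chen_equality_converse (n : ℕ) (hn : 3 ≤ n) (h : ℕ → ℕ → ℝ)
    (hsymm : ∀ i j, h i j = h j i)
    (hdiag : ∀ i ∈ Finset.Ico 2 n, h 0 0 + h 1 1 = h i i)
    (hoff : ∀ i j, i ≠ j → h i j = 0) :
    (∑ i ∈ Finset.range n, ∑ j ∈ Finset.Ico (i + 1) n, (h i i * h j j - (h i j) ^ 2)) -
        (h 0 0 * h 1 1 - (h 0 1) ^ 2) =
      ((n - 2 : ℝ) / (2 * (n - 1))) * (∑ i ∈ Finset.range n, h i i) ^ 2 :=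
  chen_equality_converse_general n hn h hdiag hoff
end
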